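/- arXiv:2008.03279 — 3 statements merged into one kernel-verified Lean document; each statement's English description precedes it below -/
import Mathlib

section
/- Let R, S be finite digraphs and D' a class of finite digraphs. Then R ⊑_Γ S with respect to D' if and only if #Θ_{G,R}(ξ) ≤ #Θ_{G,S}(ξ) for every G ∈ D' and every ξ ∈ H(G,R). -/
/-- A homomorphism between digraphs `(V, A)` and `(W, B)`:
a map sending every arc to an arc. -/
def IsHom {V W : Type} (A : V → V → Prop) (B : W → W → Prop) (f : V → W) : Prop :=
  ∀ ⦃v w : V⦄, A v w → B (f v) (f w)

/-- A strict homomorphism: a homomorphism mapping proper arcs to proper arcs. -/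
def IsStrictHom {V W : Type} (A : V → V → Prop) (B : W → W → Prop) (f : V → W) : Prop :=
  IsHom A B f ∧ ∀ ⦃v w : V⦄, A v w → v ≠ w → f v ≠ f w

/-- Adjacency in a digraph. -/
def DAdj {V : Type} (A : V → V → Prop) (v w : V) : Prop := A v w ∨ A w v

/-- `v` and `w` are connected in `X`: `v = w` (with `v ∈ X`), or there is a line
`z 0, …, z I` inside `X` connecting them, consecutive members being adjacent. -/
def ConnIn {V : Type} (A : V → V → Prop) (X : Set V) (v w : V) : Prop :=
  ∃ (I : ℕ) (z : ℕ → V), z 0 = v ∧ z I = w ∧ (∀ i ≤ I, z i ∈ X) ∧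
    ∀ i < I, DAdj A (z i) (z (i + 1))

/-- `γ_X(v)`: the set of `w ∈ X` connected with `v` in `X`. -/
def gammaSet {V : Type} (A : V → V → Prop) (X : Set V) (v : V) : Set V :=
  {w | ConnIn A X v w}

/-- `Γ_ξ(v)`: the connectivity component of `v` in the preimage `ξ⁻¹(ξ(v))`. -/
def GammaComp {V W : Type} (A : V → V → Prop) (ξ : V → W) (v : V) : Set V :=
  gammaSet A {u | ξ u = ξ v} v

/-- The set of homomorphisms `H(G,H)` (as a type). -/
def HomSet {V W : Type} (A : V → V → Prop) (B : W → W → Prop) : Type :=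
  {f : V → W // IsHom A B f}

/-- The set of strict homomorphisms `S(G,H)` (as a type). -/
def StrictHomSet {V W : Type} (A : V → V → Prop) (B : W → W → Prop) : Type :=
  {f : V → W // IsStrictHom A B f}

/-- The vertex set of the digraph `G_ξ`: the components `Γ_ξ(v)`, `v ∈ V(G)`. -/
def GVert {V W : Type} (A : V → V → Prop) (ξ : V → W) : Type :=
  {C : Set V // ∃ v, C = GammaComp A ξ v}

/-- The arc relation of the digraph `G_ξ`. -/
def GArc {V W : Type} (A : V → V → Prop) (ξ : V → W) :
    GVert A ξ → GVert A ξ → Prop :=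
  fun C D => ∃ a ∈ C.1, ∃ b ∈ D.1, A a b

/-- The canonical map `π_ξ : G → G_ξ`, `v ↦ Γ_ξ(v)`. -/
def piMap {V W : Type} (A : V → V → Prop) (ξ : V → W) (v : V) : GVert A ξ :=
  ⟨GammaComp A ξ v, v, rfl⟩

/-- `Θ_{G,H'}(ξ)`: the homomorphisms `ζ : G → H'` with `G_ζ = G_ξ`
(equality of the digraphs `G_ζ` and `G_ξ`, i.e. of their vertex sets,
which determines the arc sets). -/
def ThetaSet {V W W' : Type} (A : V → V → Prop) (B' : W' → W' → Prop)
    (ξ : V → W) : Set (V → W') :=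
  {ζ | IsHom A B' ζ ∧
    {C : Set V | ∃ v, C = GammaComp A ζ v} = {C : Set V | ∃ v, C = GammaComp A ξ v}}

/-- `R ⊑_Γ S` with respect to a class `D'` of finite digraphs: a strong Γ-scheme
from `R` to `S` exists, i.e. for every finite digraph `G ∈ D'` an injective map
`ρ_G : H(G,R) → H(G,S)` with `Γ_{ρ_G(ξ)}(v) = Γ_ξ(v)` for all `ξ`, `v`. -/
def SqGamma (D' : (V : Type) → (V → V → Prop) → Prop)
    {VR VS : Type} (R : VR → VR → Prop) (S : VS → VS → Prop) : Prop :=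
  ∀ (V : Type) [Finite V] [Nonempty V] (A : V → V → Prop), D' V A →
    ∃ ρ : HomSet A R → HomSet A S, Function.Injective ρ ∧
      ∀ (ξ : HomSet A R) (v : V), GammaComp A (ρ ξ).1 v = GammaComp A ξ.1 v

/-- The class `T_a`: digraphs whose loop-removed digraph is acyclic,
i.e. every closed walk is trivial. -/
def Ta {V : Type} (A : V → V → Prop) : Prop :=
  ∀ (z : ℕ → V) (I : ℕ), 0 < I →
    (∀ i < I, A (z i) (z (i + 1)) ∧ z i ≠ z (i + 1)) → z 0 ≠ z I

/-- A poset: a reflexive, antisymmetric, transitive digraph. -/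
def IsPosetRel {V : Type} (A : V → V → Prop) : Prop :=
  Reflexive A ∧ AntiSymmetric A ∧ Transitive A

/-- An element of `P^*`: an irreflexive, antisymmetric, transitive digraph. -/
def IsStrictPosetRel {V : Type} (A : V → V → Prop) : Prop :=
  Irreflexive A ∧ AntiSymmetric A ∧ Transitive A

/-- The direct (disjoint) sum of two digraphs. -/
def sumRel {V W : Type} (A : V → V → Prop) (B : W → W → Prop) :
    V ⊕ W → V ⊕ W → Prop
  | Sum.inl v, Sum.inl w => A v w
  | Sum.inr v, Sum.inr w => B v w
  | _, _ => False

/-- The open neighborhood `N(v)`. -/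
def Nbr {Z : Type} (A : Z → Z → Prop) (v : Z) : Set Z :=
  {w | w ≠ v ∧ (A v w ∨ A w v)}

/-- The in-neighborhood `N^in(v)`. -/
def NIn {Z : Type} (A : Z → Z → Prop) (v : Z) : Set Z :=
  {w | w ≠ v ∧ A w v}

/-- The out-neighborhood `N^out(v)`. -/
def NOut {Z : Type} (A : Z → Z → Prop) (v : Z) : Set Z :=
  {w | w ≠ v ∧ A v w}

/-- `A_r`: the arcs of `R` minus all arcs between `M` and `X`. -/
def ArRel {Z : Type} (A : Z → Z → Prop) (X M : Set Z) : Z → Z → Prop :=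
  fun v w => A v w ∧ ¬(v ∈ M ∧ w ∈ X) ∧ ¬(v ∈ X ∧ w ∈ M)

/-- `A_d = { m β(x) : m x ∈ A(R) ∩ (M × X) }`. -/
def AdRel {Z : Type} (A : Z → Z → Prop) (X M : Set Z) (β : Z → Z) : Z → Z → Prop :=
  fun v w => v ∈ M ∧ ∃ x ∈ X, A v x ∧ w = β x

/-- `A_u = { β(x) m : x m ∈ A(R) ∩ (X × M) }`. -/
def AuRel {Z : Type} (A : Z → Z → Prop) (X M : Set Z) (β : Z → Z) : Z → Z → Prop :=
  fun v w => w ∈ M ∧ ∃ x ∈ X, A x w ∧ v = β x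

/-- The rearranged digraph `S`, with `A(S) = A_r ∪ A_d ∪ A_u`. -/
def SRel {Z : Type} (A : Z → Z → Prop) (X M : Set Z) (β : Z → Z) : Z → Z → Prop :=
  fun v w => ArRel A X M v w ∨ AdRel A X M β v w ∨ AuRel A X M β v w

/-- `U_ξ = { v : ξ(v) ∈ T and ξ[N_G(v)] ∩ M ≠ ∅ }` (for `T = X`; with `T = Y`
this gives `U'_ζ`). -/
def USet {V Z : Type} (AG : V → V → Prop) (T M : Set Z) (ξ : V → Z) : Set V :=
  {v | ξ v ∈ T ∧ ∃ w ∈ Nbr AG v, ξ w ∈ M}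

open Classical in
/-- The rearranged homomorphism `ρ_G(ξ)`: `β(ξ(v))` on `U_ξ` and `ξ(v)` elsewhere. -/
noncomputable def rhoMap {V Z : Type} (AG : V → V → Prop) (X M : Set Z) (β : Z → Z)
    (ξ : V → Z) : V → Z :=
  fun v => if v ∈ USet AG X M ξ then β (ξ v) else ξ v

/-!
`Θ_{G,H}(ξ)` is the fibre over `V(G_ξ)` of the map `ζ ↦ V(G_ζ)` on `H(G,H)`, and since the
set of components `V(G_ζ)` determines every `Γ_ζ(v)`, a strong Γ-scheme `ρ_G` is precisely an
injection `H(G,R) → H(G,S)` commuting with these maps. Such an injection exists iff each fibre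
on the `R`-side is no larger than the corresponding fibre on the `S`-side; gluing fibrewise
injections gives it.
-/

open Function Relation

theorem exists_injective_comp_eq_iff_card_fiber_le {α β γ : Type*} [Finite α] [Finite β]
    (f : α → γ) (g : β → γ) :
    (∃ ρ : α → β, Injective ρ ∧ ∀ a, g (ρ a) = f a) ↔
      ∀ a, Nat.card {x // f x = f a} ≤ Nat.card {y // g y = f a} := by
  constructor
  · rintro ⟨ρ, hρ, hgρ⟩ a
    exact Nat.card_le_card_of_injective _ (Subtype.map_injective (fun x hx => (hgρ x).trans hx) hρ)
  · intro h
    have fiber_embedding : ∀ c, Nonempty ({x // f x = c} ↪ {y // g y = c}) := by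
      intro c
      rcases isEmpty_or_nonempty {x // f x = c} with _ | ⟨⟨a, rfl⟩⟩
      · exact ⟨Embedding.ofIsEmpty⟩
      · have := Fintype.ofFinite {x // f x = f a}
        have := Fintype.ofFinite {y // g y = f a}
        exact Embedding.nonempty_of_card_le (by simpa only [Nat.card_eq_fintype_card] using h a)
    let σ : (Σ c, {x // f x = c}) ↪ Σ c, {y // g y = c} :=
      Embedding.sigmaMap (.refl γ) fun c => (fiber_embedding c).some
    let ρ := ((Equiv.sigmaFiberEquiv f).symm.toEmbedding.trans σ).trans
      (Equiv.sigmaFiberEquiv g).toEmbedding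
    exact ⟨ρ, ρ.injective, fun a => (σ ⟨f a, a, rfl⟩).2.2⟩

section Connectivity

variable {V : Type} {A : V → V → Prop} {X : Set V} {v w : V}

def AdjWithin (A : V → V → Prop) (X : Set V) (a b : V) : Prop :=
  a ∈ X ∧ b ∈ X ∧ DAdj A a b

instance : Std.Symm (AdjWithin A X) :=
  ⟨fun _ _ ⟨ha, hb, hab⟩ => ⟨hb, ha, hab.symm⟩⟩

theorem ConnIn.mem_right (h : ConnIn A X v w) : w ∈ X := by
  obtain ⟨I, z, -, rfl, hX, -⟩ := h
  exact hX I le_rfl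

theorem connIn_iff_reflTransGen : ConnIn A X v w ↔ v ∈ X ∧ ReflTransGen (AdjWithin A X) v w := by
  constructor
  · rintro ⟨I, z, rfl, rfl, hX, hA⟩
    refine ⟨hX 0 I.zero_le, ?_⟩
    suffices ∀ k ≤ I, ReflTransGen (AdjWithin A X) (z 0) (z k) from this I le_rfl
    intro k hk
    induction k with
    | zero => rfl
    | succ k ih => exact (ih (by omega)).tail ⟨hX k (by omega), hX (k + 1) hk, hA k hk⟩
  · rintro ⟨hv, h⟩
    induction h with
    | refl => exact ⟨0, fun _ => v, rfl, rfl, fun _ _ => hv, fun _ h => absurd h (Nat.not_lt_zero _)⟩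
    | @tail b c _ hbc ih =>
      obtain ⟨I, z, h0, hI, hX, hA⟩ := ih
      refine ⟨I + 1, fun i => if i ≤ I then z i else c, by simpa using h0, by simp, ?_, ?_⟩
      · intro i hi
        dsimp only
        split_ifs
        · exact hX i ‹_›
        · exact hbc.2.1
      · intro i hi
        by_cases hiI : i + 1 ≤ I
        · simpa [hiI, show i ≤ I by omega] using hA i hiI
        · obtain rfl : i = I := by omega
          simpa [hI] using hbc.2.2

theorem gammaSet_eq_of_mem (h : w ∈ gammaSet A X v) : gammaSet A X w = gammaSet A X v := by
  have hw := ConnIn.mem_right h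
  obtain ⟨hv, hvw⟩ := connIn_iff_reflTransGen.1 h
  ext u
  simp only [gammaSet, Set.mem_ofPred_eq, connIn_iff_reflTransGen]
  exact ⟨fun ⟨_, hwu⟩ => ⟨hv, hvw.trans hwu⟩, fun ⟨_, hvu⟩ => ⟨hw, (symm hvw).trans hvu⟩⟩

end Connectivity

section Components

variable {V W W' : Type} {A : V → V → Prop}

theorem mem_gammaComp_self (ζ : V → W) (v : V) : v ∈ GammaComp A ζ v :=
  connIn_iff_reflTransGen.2 ⟨rfl, .refl⟩

theorem gammaComp_eq_of_mem {ζ : V → W} {v w : V} (h : w ∈ GammaComp A ζ v) :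
    GammaComp A ζ w = GammaComp A ζ v := by
  have hζ : ζ w = ζ v := ConnIn.mem_right (X := {u | ζ u = ζ v}) h
  unfold GammaComp
  rw [hζ]
  exact gammaSet_eq_of_mem h

/-- The vertex set `V(G_ζ)` of `G_ζ`. -/
def gammaComps (A : V → V → Prop) (ζ : V → W) : Set (Set V) :=
  {C | ∃ v, C = GammaComp A ζ v}

theorem gammaComps_eq_iff {ζ : V → W} {ξ : V → W'} :
    gammaComps A ζ = gammaComps A ξ ↔ ∀ v, GammaComp A ζ v = GammaComp A ξ v := by
  constructor
  · intro h v
    obtain ⟨w, hw⟩ : GammaComp A ξ v ∈ gammaComps A ζ := h ▸ ⟨v, rfl⟩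
    have hv : v ∈ GammaComp A ζ w := hw ▸ mem_gammaComp_self ξ v
    rw [gammaComp_eq_of_mem hv, hw]
  · intro h
    ext C
    exact ⟨fun ⟨v, hv⟩ => ⟨v, hv.trans (h v)⟩, fun ⟨v, hv⟩ => ⟨v, hv.trans (h v).symm⟩⟩

instance [Finite V] [Finite W] (B : W → W → Prop) : Finite (HomSet A B) :=
  Subtype.finite

def thetaSetEquiv (A : V → V → Prop) (B : W' → W' → Prop) (ξ : V → W) :
    ThetaSet A B ξ ≃ {ζ : HomSet A B // gammaComps A ζ.1 = gammaComps A ξ} :=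
  (Equiv.subtypeSubtypeEquivSubtypeInter _ _).symm

theorem exists_gammaScheme_iff_card_thetaSet_le [Finite V] {VR VS : Type} [Finite VR] [Finite VS]
    (A : V → V → Prop) (R : VR → VR → Prop) (S : VS → VS → Prop) :
    (∃ ρ : HomSet A R → HomSet A S, Injective ρ ∧
        ∀ (ξ : HomSet A R) (v : V), GammaComp A (ρ ξ).1 v = GammaComp A ξ.1 v) ↔
      ∀ ξ : V → VR, IsHom A R ξ → Nat.card (ThetaSet A R ξ) ≤ Nat.card (ThetaSet A S ξ) := by
  calc (∃ ρ : HomSet A R → HomSet A S, Injective ρ ∧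
        ∀ (ξ : HomSet A R) (v : V), GammaComp A (ρ ξ).1 v = GammaComp A ξ.1 v)
      ↔ ∃ ρ : HomSet A R → HomSet A S, Injective ρ ∧
          ∀ ξ : HomSet A R, gammaComps A (ρ ξ).1 = gammaComps A ξ.1 := by
        simp only [gammaComps_eq_iff]
    _ ↔ ∀ ξ : HomSet A R, Nat.card {ζ : HomSet A R // gammaComps A ζ.1 = gammaComps A ξ.1} ≤
          Nat.card {ζ : HomSet A S // gammaComps A ζ.1 = gammaComps A ξ.1} :=
        exists_injective_comp_eq_iff_card_fiber_le (fun ξ : HomSet A R => gammaComps A ξ.1)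
          (fun ζ : HomSet A S => gammaComps A ζ.1)
    _ ↔ _ := by
        simp only [← Nat.card_congr (thetaSetEquiv A _ _)]
        exact Subtype.forall

end Components

theorem stmt4_general {VR VS : Type} [Finite VR] [Finite VS]
    (R : VR → VR → Prop) (S : VS → VS → Prop)
    (D' : (V : Type) → (V → V → Prop) → Prop) :
    SqGamma D' R S ↔
      ∀ (V : Type) [Finite V] [Nonempty V] (A : V → V → Prop), D' V A →
        ∀ ξ : V → VR, IsHom A R ξ →
          Nat.card ↥(ThetaSet A R ξ) ≤ Nat.card ↥(ThetaSet A S ξ) :=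
  forall_congr' fun _ => forall_congr' fun _ => forall_congr' fun _ => forall_congr' fun A =>
    forall_congr' fun _ => exists_gammaScheme_iff_card_thetaSet_le A R S

/-- `R ⊑_Γ S` with respect to a class `D'` of finite digraphs iff
`#Θ_{G,R}(ξ) ≤ #Θ_{G,S}(ξ)` for every `G ∈ D'` and `ξ ∈ H(G,R)`. -/
theorem stmt4 {VR VS : Type} [Finite VR] [Nonempty VR] [Finite VS] [Nonempty VS]
    (R : VR → VR → Prop) (S : VS → VS → Prop)
    (D' : (V : Type) → (V → V → Prop) → Prop) :
    SqGamma D' R S ↔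
      ∀ (V : Type) [Finite V] [Nonempty V] (A : V → V → Prop), D' V A →
        ∀ ξ : V → VR, IsHom A R ξ →
          Nat.card ↥(ThetaSet A R ξ) ≤ Nat.card ↥(ThetaSet A S ξ) :=
  stmt4_general R S D'
end

section
/- Let R ∈ T_a and let D' be a class of finite digraphs with T_a ⊆ D'. Then for every finite digraph S: R ⊑_Γ S with respect to D' if and only if #S(G,R) ≤ #S(G,S) for every G ∈ D'. -/
/-!
The components `Γ_ξ` of a homomorphism `ξ : G → R` record exactly which arcs of `G` it
collapses. So `ξ` factors as the projection `π : G → G_ξ` onto the quotient by these components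
followed by a strict homomorphism `G_ξ → R`, and `G_ξ ∈ T_a` because it maps strictly into
`R ∈ T_a`; conversely, for every strict `η : G_ξ → S` the homomorphism `η ∘ π` has the same
components as `ξ`. Hence a strong Γ-scheme restricts to an injection `S(G,R) → S(G,S)`, and
injections `S(G_ξ,R) → S(G_ξ,S)`, chosen once per partition `G_ξ`, assemble to a strong Γ-scheme.
-/

open Relation

variable {V W W' : Type} {A : V → V → Prop}

theorem Ta.of_isStrictHom {B : W → W → Prop} {f : V → W} (hf : IsStrictHom A B f) (hB : Ta B) :
    Ta A := fun z I hI hz h0I =>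
  hB (f ∘ z) I hI (fun i hi => ⟨hf.1 (hz i hi).1, hf.2 (hz i hi).1 (hz i hi).2⟩)
    (congrArg f h0I)

theorem IsStrictHom.apply_eq_iff_of_dAdj {B : W → W → Prop} {f : V → W}
    (hf : IsStrictHom A B f) {a b : V} (hab : DAdj A a b) : f a = f b ↔ a = b := by
  refine ⟨fun he => by_contra fun hne => ?_, congrArg f⟩
  rcases hab with hab | hba
  · exact hf.2 hab hne he
  · exact hf.2 hba (Ne.symm hne) he.symm

instance [Finite V] [Finite W] {B : W → W → Prop} : Finite (StrictHomSet A B) :=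
  Subtype.finite

theorem nonempty_embedding_of_natCard_le {α β : Type} [Finite α] [Finite β]
    (h : Nat.card α ≤ Nat.card β) : Nonempty (α ↪ β) := by
  have := Fintype.ofFinite α
  have := Fintype.ofFinite β
  rw [Nat.card_eq_fintype_card, Nat.card_eq_fintype_card] at h
  exact Function.Embedding.nonempty_of_card_le h

def fiberAdj (A : V → V → Prop) (ξ : V → W) (a b : V) : Prop :=
  ξ a = ξ b ∧ DAdj A a b

instance (ξ : V → W) : Std.Symm (fiberAdj A ξ) where
  symm _ _ h := ⟨h.1.symm, h.2.symm⟩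

theorem mem_gammaComp_iff {ξ : V → W} {v w : V} :
    w ∈ GammaComp A ξ v ↔ ReflTransGen (fiberAdj A ξ) v w := by
  constructor
  · rintro ⟨I, z, rfl, rfl, hfib, hadj⟩
    suffices ∀ i ≤ I, ReflTransGen (fiberAdj A ξ) (z 0) (z i) from this I le_rfl
    intro i hi
    induction i with
    | zero => exact .refl
    | succ i ih =>
      have hfib_i : ξ (z i) = ξ (z 0) := hfib i (by omega)
      have hfib_succ : ξ (z (i + 1)) = ξ (z 0) := hfib (i + 1) hi
      exact (ih (by omega)).tail ⟨hfib_i.trans hfib_succ.symm, hadj i hi⟩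
  · intro h
    induction h with
    | refl => exact ⟨0, fun _ => v, rfl, rfl, fun _ _ => rfl, fun _ h => absurd h (by omega)⟩
    | @tail b c _ hbc ih =>
      obtain ⟨I, z, hz0, hzI, hfib, hadj⟩ := ih
      refine ⟨I + 1, fun i => if i ≤ I then z i else c, by simp [hz0], by simp, ?_, ?_⟩
      · intro i hi
        by_cases hiI : i ≤ I
        · simpa [hiI] using hfib i hiI
        · have hb : ξ b = ξ v := hzI ▸ hfib I le_rfl
          simpa [hiI] using hbc.1.symm.trans hb
      · intro i hi
        by_cases hiI : i < I
        · simpa [hiI.le, Nat.succ_le_of_lt hiI] using hadj i hiI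
        · obtain rfl : i = I := by omega
          simpa [hzI] using hbc.2

theorem apply_eq_of_mem_gammaComp {ξ : V → W} {v w : V} (h : w ∈ GammaComp A ξ v) :
    ξ w = ξ v := by
  obtain ⟨I, z, -, rfl, hfib, -⟩ := h
  exact hfib I le_rfl

theorem apply_eq_iff_mem_gammaComp {ξ : V → W} {a b : V} (hab : DAdj A a b) :
    ξ a = ξ b ↔ b ∈ GammaComp A ξ a :=
  ⟨fun he => mem_gammaComp_iff.2 (.single ⟨he, hab⟩),
    fun h => (apply_eq_of_mem_gammaComp h).symm⟩

theorem gammaComp_eq_iff {ξ : V → W} {ζ : V → W'} :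
    GammaComp A ξ = GammaComp A ζ ↔ ∀ a b, DAdj A a b → (ξ a = ξ b ↔ ζ a = ζ b) := by
  refine ⟨fun h a b hab => ?_, fun h => ?_⟩
  · rw [apply_eq_iff_mem_gammaComp hab, apply_eq_iff_mem_gammaComp hab, h]
  · have hadj : fiberAdj A ξ = fiberAdj A ζ := by
      ext a b
      exact and_congr_left (h a b)
    funext v
    ext w
    rw [mem_gammaComp_iff, mem_gammaComp_iff, hadj]

theorem isStrictHom_of_gammaComp_eq {B : W → W → Prop} {B' : W' → W' → Prop} {ζ : V → W}
    {ξ : V → W'} (hζ : IsHom A B ζ) (hξ : IsStrictHom A B' ξ)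
    (h : GammaComp A ζ = GammaComp A ξ) : IsStrictHom A B ζ :=
  ⟨hζ, fun a b hab hne he => hξ.2 hab hne ((gammaComp_eq_iff.1 h a b (Or.inl hab)).1 he)⟩

theorem natCard_strictHomSet_le_of_gammaScheme [Finite V] [Finite W'] {B : W → W → Prop}
    {B' : W' → W' → Prop} (ρ : HomSet A B → HomSet A B') (hρ : Function.Injective ρ)
    (hΓ : ∀ ξ v, GammaComp A (ρ ξ).1 v = GammaComp A ξ.1 v) :
    Nat.card (StrictHomSet A B) ≤ Nat.card (StrictHomSet A B') := by
  let σ : StrictHomSet A B → StrictHomSet A B' := fun ξ =>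
    ⟨(ρ ⟨ξ.1, ξ.2.1⟩).1, isStrictHom_of_gammaComp_eq (ρ _).2 ξ.2 (funext (hΓ _))⟩
  refine Nat.card_le_card_of_injective σ fun ξ₁ ξ₂ h => ?_
  have h' : (⟨ξ₁.1, ξ₁.2.1⟩ : HomSet A B) = ⟨ξ₂.1, ξ₂.2.1⟩ :=
    hρ (Subtype.ext (congrArg Subtype.val h :))
  exact Subtype.ext (congrArg Subtype.val h' :)

def gammaSetoid (A : V → V → Prop) (ξ : V → W) : Setoid V where
  r := ReflTransGen (fiberAdj A ξ)
  iseqv := ⟨fun _ => .refl, fun h => symm h, .trans⟩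

theorem gammaSetoid_eq_of_gammaComp_eq {ξ : V → W} {ζ : V → W'}
    (h : GammaComp A ξ = GammaComp A ζ) : gammaSetoid A ξ = gammaSetoid A ζ := by
  ext a b
  change ReflTransGen _ a b ↔ ReflTransGen _ a b
  rw [← mem_gammaComp_iff, ← mem_gammaComp_iff, h]

instance (s : Setoid V) [Nonempty V] : Nonempty (Quotient s) :=
  Nonempty.map (Quotient.mk s) ‹_›

/-- The digraph `G_ξ` of the paper is `quotDigraph A (gammaSetoid A ξ)`. -/
def quotDigraph (A : V → V → Prop) (s : Setoid V) : Quotient s → Quotient s → Prop :=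
  Relation.Map A (Quotient.mk s) (Quotient.mk s)

theorem isHom_quotientMk (s : Setoid V) : IsHom A (quotDigraph A s) (Quotient.mk s) :=
  fun a b hab => ⟨a, b, hab, rfl, rfl⟩

def gammaLift (A : V → V → Prop) (ξ : V → W) : Quotient (gammaSetoid A ξ) → W :=
  Quotient.lift ξ fun _ _ h => (apply_eq_of_mem_gammaComp (mem_gammaComp_iff.2 h)).symm

theorem isStrictHom_gammaLift {B : W → W → Prop} {ξ : V → W} (hξ : IsHom A B ξ) :
    IsStrictHom (quotDigraph A (gammaSetoid A ξ)) B (gammaLift A ξ) := by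
  constructor
  · rintro _ _ ⟨a, b, hab, rfl, rfl⟩
    exact hξ hab
  · rintro _ _ ⟨a, b, hab, rfl, rfl⟩ hne he
    exact hne (Quotient.sound (.single ⟨he, Or.inl hab⟩))

theorem gammaComp_comp_quotientMk {B : W' → W' → Prop} {ξ : V → W}
    {η : Quotient (gammaSetoid A ξ) → W'}
    (hη : IsStrictHom (quotDigraph A (gammaSetoid A ξ)) B η) :
    GammaComp A (η ∘ Quotient.mk _) = GammaComp A ξ := by
  refine gammaComp_eq_iff.2 fun a b hab => ?_
  have hab' := hab.imp (@isHom_quotientMk _ A (gammaSetoid A ξ) a b)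
    (@isHom_quotientMk _ A (gammaSetoid A ξ) b a)
  rw [Function.comp_apply, Function.comp_apply, hη.apply_eq_iff_of_dAdj hab', Quotient.eq,
    apply_eq_iff_mem_gammaComp hab, mem_gammaComp_iff]
  rfl

theorem exists_gammaScheme_of_embeddings {B : W → W → Prop} {B' : W' → W' → Prop}
    (hemb : ∀ ξ : HomSet A B, Nonempty (StrictHomSet (quotDigraph A (gammaSetoid A ξ.1)) B ↪
      StrictHomSet (quotDigraph A (gammaSetoid A ξ.1)) B')) :
    ∃ ρ : HomSet A B → HomSet A B', Function.Injective ρ ∧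
      ∀ ξ v, GammaComp A (ρ ξ).1 v = GammaComp A ξ.1 v := by
  -- the injection is chosen per partition `s`, not per `ξ`, so that `ρ ξ` determines it
  have j : ∀ s : Setoid V, (∃ ξ : HomSet A B, gammaSetoid A ξ.1 = s) →
      (StrictHomSet (quotDigraph A s) B ↪ StrictHomSet (quotDigraph A s) B') :=
    fun s hs => Classical.choice (by obtain ⟨ξ, rfl⟩ := hs; exact hemb ξ)
  let η (ξ : HomSet A B) : StrictHomSet (quotDigraph A (gammaSetoid A ξ.1)) B' :=
    j _ ⟨ξ, rfl⟩ ⟨gammaLift A ξ.1, isStrictHom_gammaLift ξ.2⟩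
  have hΓ (ξ : HomSet A B) : GammaComp A ((η ξ).1 ∘ Quotient.mk _) = GammaComp A ξ.1 :=
    gammaComp_comp_quotientMk (η ξ).2
  refine ⟨fun ξ => ⟨(η ξ).1 ∘ Quotient.mk _, fun a b hab => (η ξ).2.1 (isHom_quotientMk _ hab)⟩,
    fun ξ₁ ξ₂ h => ?_, fun ξ => congrFun (hΓ ξ)⟩
  have h' : (η ξ₁).1 ∘ Quotient.mk _ = (η ξ₂).1 ∘ Quotient.mk _ := congrArg Subtype.val h
  have hs : gammaSetoid A ξ₁.1 = gammaSetoid A ξ₂.1 :=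
    gammaSetoid_eq_of_gammaComp_eq ((hΓ ξ₁).symm.trans (h' ▸ hΓ ξ₂))
  have key : ∀ (s₁ s₂ : Setoid V) (p₁ p₂) (θ₁ : StrictHomSet (quotDigraph A s₁) B)
      (θ₂ : StrictHomSet (quotDigraph A s₂) B), s₁ = s₂ →
      (j s₁ p₁ θ₁).1 ∘ Quotient.mk _ = (j s₂ p₂ θ₂).1 ∘ Quotient.mk _ →
      θ₁.1 ∘ Quotient.mk _ = θ₂.1 ∘ Quotient.mk _ := by
    rintro s _ p _ θ₁ θ₂ rfl hθ
    rw [(j s p).injective (Subtype.ext (Quotient.mk_surjective.injective_comp_right hθ))]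
  exact Subtype.ext (key _ _ _ _ _ _ hs h')

theorem stmt10_general {VR : Type} [Finite VR] (R : VR → VR → Prop)
    (hR : Ta R)
    (D' : (V : Type) → (V → V → Prop) → Prop)
    (hTa : ∀ (V : Type) [Finite V] [Nonempty V] (A : V → V → Prop), Ta A → D' V A)
    {VS : Type} [Finite VS] (S : VS → VS → Prop) :
    SqGamma D' R S ↔
      ∀ (V : Type) [Finite V] [Nonempty V] (A : V → V → Prop), D' V A →
        Nat.card (StrictHomSet A R) ≤ Nat.card (StrictHomSet A S) := by
  refine ⟨fun hsq V _ _ A hA => ?_,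
    fun hcard V _ _ A _ => exists_gammaScheme_of_embeddings fun ξ => ?_⟩
  · obtain ⟨ρ, hρ, hΓ⟩ := hsq V A hA
    exact natCard_strictHomSet_le_of_gammaScheme ρ hρ hΓ
  · have hquot : Ta (quotDigraph A (gammaSetoid A ξ.1)) :=
      Ta.of_isStrictHom (isStrictHom_gammaLift ξ.2) hR
    exact nonempty_embedding_of_natCard_le (hcard _ _ (hTa _ _ hquot))

/-- For `R ∈ T_a` and a class `D'` of finite digraphs with `T_a ⊆ D'`:
`R ⊑_Γ S` with respect to `D'` iff `#S(G,R) ≤ #S(G,S)` for every `G ∈ D'`. -/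
theorem stmt10 {VR : Type} [Finite VR] [Nonempty VR] (R : VR → VR → Prop)
    (hR : Ta R)
    (D' : (V : Type) → (V → V → Prop) → Prop)
    (hTa : ∀ (V : Type) [Finite V] [Nonempty V] (A : V → V → Prop), Ta A → D' V A)
    {VS : Type} [Finite VS] [Nonempty VS] (S : VS → VS → Prop) :
    SqGamma D' R S ↔
      ∀ (V : Type) [Finite V] [Nonempty V] (A : V → V → Prop), D' V A →
        Nat.card (StrictHomSet A R) ≤ Nat.card (StrictHomSet A S) :=
  stmt10_general R hR D' hTa S
end

section
/- Let R and S be finite posets. If #S(P,R) ≤ #S(P,S) for every finite poset P, then #H(P,R) ≤ #H(P,S) for every finite poset P. -/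
/-!
A homomorphism `ξ : G → B` into a poset factors uniquely as the projection of `G` onto the
partition into connected components of the fibres of `ξ`, followed by a strict homomorphism
out of the quotient. The quotient preorder is antisymmetric, and a partition arises this
way exactly when it is recovered as the fibre components of its own projection. Hence
`#H(G,B) = ∑_e #S(G/e,B)` over these admissible partitions `e`, and the hypothesis bounds
every summand, since each `G/e` is a finite poset.
-/

section FiberQuotient

variable {V Z : Type} {A : V → V → Prop}

def fiberSetoid (A : V → V → Prop) (ξ : V → Z) : Setoid V :=
  Relation.EqvGen.setoid fun v w => ξ v = ξ w ∧ DAdj A v w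

def quotRel (A : V → V → Prop) (e : Setoid V) : Quotient e → Quotient e → Prop :=
  Relation.ReflTransGen (Relation.Map A (Quotient.mk e) (Quotient.mk e))

def IsAdmissibleSetoid (A : V → V → Prop) (e : Setoid V) : Prop :=
  IsPosetRel (quotRel A e) ∧ fiberSetoid A (Quotient.mk e) = e

lemma fiberSetoid_le_ker (ξ : V → Z) : fiberSetoid A ξ ≤ Setoid.ker ξ :=
  Setoid.eqvGen_le fun _ _ h => h.1

def fiberLift (A : V → V → Prop) (ξ : V → Z) : Quotient (fiberSetoid A ξ) → Z :=
  Quotient.lift ξ fun _ _ h => fiberSetoid_le_ker ξ h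

lemma isHom_quotient_mk (e : Setoid V) : IsHom A (quotRel A e) (Quotient.mk e) :=
  fun a b h => Relation.ReflTransGen.single ⟨a, b, h, rfl, rfl⟩

lemma fiberSetoid_comp_of_isStrictHom {W : Type} {A' : W → W → Prop} {B : Z → Z → Prop}
    {f : V → W} {ζ : W → Z} (hf : IsHom A A' f) (hζ : IsStrictHom A' B ζ) :
    fiberSetoid A (ζ ∘ f) = fiberSetoid A f := by
  have hfib : ∀ a b, (ζ (f a) = ζ (f b) ∧ DAdj A a b) ↔ (f a = f b ∧ DAdj A a b) := by
    refine fun a b => ⟨fun ⟨heq, hadj⟩ => ⟨?_, hadj⟩, fun ⟨heq, hadj⟩ => ⟨congrArg ζ heq, hadj⟩⟩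
    by_contra hne
    rcases hadj with hab | hba
    · exact hζ.2 (hf hab) hne heq
    · exact hζ.2 (hf hba) (Ne.symm hne) heq.symm
  simp only [fiberSetoid, Function.comp_apply, hfib]

variable {B : Z → Z → Prop} {ξ : V → Z}

lemma IsHom.isHom_fiberLift (hB : IsPosetRel B) (hξ : IsHom A B ξ) :
    IsHom (quotRel A (fiberSetoid A ξ)) B (fiberLift A ξ) := by
  intro x y hxy
  induction hxy with
  | refl => exact hB.1 _
  | tail _ step ih =>
    obtain ⟨a, b, hab, rfl, rfl⟩ := step
    exact hB.2.2 ih (hξ hab)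

/-- A path of the quotient along which `fiberLift` is constant stays in one fibre component:
by antisymmetry of `B` each step is an arc inside a fibre. -/
lemma IsHom.eq_of_quotRel_of_fiberLift_eq (hB : IsPosetRel B) (hξ : IsHom A B ξ)
    {x y : Quotient (fiberSetoid A ξ)} (hxy : quotRel A (fiberSetoid A ξ) x y)
    (hlift : fiberLift A ξ x = fiberLift A ξ y) : x = y := by
  induction hxy using Relation.ReflTransGen.head_induction_on with
  | refl => rfl
  | head step rest ih =>
    obtain ⟨a, b, hab, rfl, rfl⟩ := step
    have hmono := hξ.isHom_fiberLift hB rest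
    have hba : B (ξ b) (ξ a) := by rw [show ξ a = fiberLift A ξ y from hlift]; exact hmono
    have hfib : ξ a = ξ b := hB.2.1 (hξ hab) hba
    have hmk : Quotient.mk (fiberSetoid A ξ) a = Quotient.mk _ b :=
      Quotient.sound (Relation.EqvGen.rel a b ⟨hfib, Or.inl hab⟩)
    rw [hmk] at hlift ⊢
    exact ih hlift

lemma IsHom.isStrictHom_fiberLift (hB : IsPosetRel B) (hξ : IsHom A B ξ) :
    IsStrictHom (quotRel A (fiberSetoid A ξ)) B (fiberLift A ξ) :=
  ⟨hξ.isHom_fiberLift hB,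
    fun _ _ hxy hne hlift => hne (hξ.eq_of_quotRel_of_fiberLift_eq hB hxy hlift)⟩

lemma IsHom.isAdmissibleSetoid_fiberSetoid (hB : IsPosetRel B) (hξ : IsHom A B ξ) :
    IsAdmissibleSetoid A (fiberSetoid A ξ) :=
  ⟨⟨fun _ => .refl, fun _ _ hxy hyx => hξ.eq_of_quotRel_of_fiberLift_eq hB hxy
      (hB.2.1 (hξ.isHom_fiberLift hB hxy) (hξ.isHom_fiberLift hB hyx)), fun _ _ _ => .trans⟩,
    (fiberSetoid_comp_of_isStrictHom (isHom_quotient_mk _) (hξ.isStrictHom_fiberLift hB)).symm⟩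

end FiberQuotient

section Factorization

variable {V Z : Type}

abbrev AdmissibleSetoid (A : V → V → Prop) : Type :=
  {e : Setoid V // IsAdmissibleSetoid A e}

abbrev QuotStrictHom (A : V → V → Prop) (B : Z → Z → Prop) : Type :=
  Σ e : AdmissibleSetoid A, StrictHomSet (quotRel A e.1) B

def factorHom (A : V → V → Prop) {B : Z → Z → Prop} (hB : IsPosetRel B) (ξ : HomSet A B) :
    QuotStrictHom A B :=
  ⟨⟨fiberSetoid A ξ.1, ξ.2.isAdmissibleSetoid_fiberSetoid hB⟩,
    ⟨fiberLift A ξ.1, ξ.2.isStrictHom_fiberLift hB⟩⟩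

def composeHom (A : V → V → Prop) (B : Z → Z → Prop) (p : QuotStrictHom A B) : HomSet A B :=
  ⟨p.2.1 ∘ Quotient.mk p.1.1, fun _ _ hab => p.2.2.1 (isHom_quotient_mk _ hab)⟩

lemma composeHom_leftInverse_factorHom (A : V → V → Prop) {B : Z → Z → Prop}
    (hB : IsPosetRel B) : Function.LeftInverse (composeHom A B) (factorHom A hB) :=
  fun _ => rfl

lemma composeHom_injective (A : V → V → Prop) (B : Z → Z → Prop) :
    Function.Injective (composeHom A B) := by
  rintro ⟨⟨e₁, he₁⟩, ζ₁, hζ₁⟩ ⟨⟨e₂, he₂⟩, ζ₂, hζ₂⟩ hcomp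
  have hval : ζ₁ ∘ Quotient.mk e₁ = ζ₂ ∘ Quotient.mk e₂ := congrArg Subtype.val hcomp
  obtain rfl : e₁ = e₂ := by
    rw [← he₁.2, ← he₂.2, ← fiberSetoid_comp_of_isStrictHom (isHom_quotient_mk e₁) hζ₁,
      ← fiberSetoid_comp_of_isStrictHom (isHom_quotient_mk e₂) hζ₂, hval]
  obtain rfl : ζ₁ = ζ₂ := funext (Quotient.ind (congrFun hval))
  rfl

end Factorization

instance {V : Type} [Finite V] : Finite (Setoid V) :=
  Finite.of_injective (fun e : Setoid V => ⇑e) fun _ _ => Setoid.eq_iff_rel_eq.2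

instance {V W : Type} [Finite V] [Finite W] (A : V → V → Prop) (B : W → W → Prop) :
    Finite (HomSet A B) :=
  Subtype.finite

instance {V W : Type} [Finite V] [Finite W] (A : V → V → Prop) (B : W → W → Prop) :
    Finite (StrictHomSet A B) :=
  Subtype.finite

theorem stmt13_general {VR VS : Type} [Finite VR] [Finite VS]
    (R : VR → VR → Prop) (S : VS → VS → Prop)
    (hR : IsPosetRel R)
    (h : ∀ (V : Type) [Finite V] [Nonempty V] (A : V → V → Prop), IsPosetRel A →
      Nat.card (StrictHomSet A R) ≤ Nat.card (StrictHomSet A S)) :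
    ∀ (V : Type) [Finite V] [Nonempty V] (A : V → V → Prop), IsPosetRel A →
      Nat.card (HomSet A R) ≤ Nat.card (HomSet A S) := by
  intro V _ _ A _
  have : Fintype (AdmissibleSetoid A) := Fintype.ofFinite _
  have hquot (e : AdmissibleSetoid A) :
      Nat.card (StrictHomSet (quotRel A e.1) R) ≤ Nat.card (StrictHomSet (quotRel A e.1) S) :=
    have : Nonempty (Quotient e.1) := (nonempty_quotient_iff _).2 ‹_›
    h _ _ e.2.1
  calc Nat.card (HomSet A R)
      ≤ Nat.card (QuotStrictHom A R) :=
        Nat.card_le_card_of_injective _ (composeHom_leftInverse_factorHom A hR).injective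
    _ = ∑ e : AdmissibleSetoid A, Nat.card (StrictHomSet (quotRel A e.1) R) := Nat.card_sigma
    _ ≤ ∑ e, Nat.card (StrictHomSet (quotRel A e.1) S) := Finset.sum_le_sum fun e _ => hquot e
    _ = Nat.card (QuotStrictHom A S) := Nat.card_sigma.symm
    _ ≤ Nat.card (HomSet A S) := Nat.card_le_card_of_injective _ (composeHom_injective A S)

/-- For finite posets `R`, `S`: if `#S(P,R) ≤ #S(P,S)` for every finite poset
`P`, then `#H(P,R) ≤ #H(P,S)` for every finite poset `P`. -/
theorem stmt13 {VR VS : Type} [Finite VR] [Nonempty VR] [Finite VS] [Nonempty VS]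
    (R : VR → VR → Prop) (S : VS → VS → Prop)
    (hR : IsPosetRel R) (hS : IsPosetRel S)
    (h : ∀ (V : Type) [Finite V] [Nonempty V] (A : V → V → Prop), IsPosetRel A →
      Nat.card (StrictHomSet A R) ≤ Nat.card (StrictHomSet A S)) :
    ∀ (V : Type) [Finite V] [Nonempty V] (A : V → V → Prop), IsPosetRel A →
      Nat.card (HomSet A R) ≤ Nat.card (HomSet A S) :=
  stmt13_general R S hR h
end
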